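/- Let G be a transitively closed episode and let e and f be episode events of G. Then: (1) if node(e) ≠ node(f), there exist a sequence s and a coverage mapping m of G into s with ts(m(e)) ≠ ts(m(f)); (2) if node(e) ≠ node(f) and node(e) is not a descendant of node(f), there exist a sequence s and a coverage mapping m of G into s with ts(m(e)) < ts(m(f)); (3) if node(e) is not a proper descendant of node(f), there exist a sequence s and a coverage mapping m of G into s with ts(m(e)) ≤ ts(m(f)). -/

import Mathlib

/-- A sequence event: a unique id, a label (from alphabet encoded as `ℕ`),
and an integer time stamp. -/
structure SeqEvent where
  id : ℕ
  lab : ℕ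
  ts : ℤ
deriving DecidableEq

/-- An event sequence: a finite collection of sequence events with distinct ids,
whose time stamps are monotone in the ids. -/
structure EventSeq where
  events : Finset SeqEvent
  id_inj : ∀ e ∈ events, ∀ f ∈ events, e.id = f.id → e = f
  ts_mono : ∀ e ∈ events, ∀ f ∈ events, e.id ≤ f.id → e.ts ≤ f.ts

/-- An episode: a finite set of episode events (identified by ids in `ℕ`) with labels,
a finite set of graph nodes, a map from events to nodes (surjectivity and the DAG
property are recorded in `Episode.WellFormed`), and weak and proper edges. -/
structure Episode where
  events : Finset ℕ
  lab : ℕ → ℕ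
  nodes : Finset ℕ
  node : ℕ → ℕ
  weak : ℕ → ℕ → Prop
  proper : ℕ → ℕ → Prop

namespace Episode

/-- An edge of the episode graph (weak or proper). -/
def edge (G : Episode) (a b : ℕ) : Prop := G.weak a b ∨ G.proper a b

/-- `G.Desc m n` : `n` is a descendant of `m`, i.e. there is a directed path from `m` to `n`. -/
def Desc (G : Episode) (m n : ℕ) : Prop := Relation.TransGen G.edge m n

/-- `G.PDesc m n` : `n` is a proper descendant of `m`, i.e. some directed path
from `m` to `n` contains a proper edge. -/
def PDesc (G : Episode) (m n : ℕ) : Prop :=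
  ∃ a b, Relation.ReflTransGen G.edge m a ∧ G.proper a b ∧ Relation.ReflTransGen G.edge b n

/-- Well-formedness of an episode: events map into the nodes, every node carries an
event, edges run between nodes, the weak and proper edges are disjoint, and the
graph is acyclic (a DAG). -/
structure WellFormed (G : Episode) : Prop where
  node_mem : ∀ e ∈ G.events, G.node e ∈ G.nodes
  node_surj : ∀ n ∈ G.nodes, ∃ e ∈ G.events, G.node e = n
  weak_mem : ∀ a b, G.weak a b → a ∈ G.nodes ∧ b ∈ G.nodes
  proper_mem : ∀ a b, G.proper a b → a ∈ G.nodes ∧ b ∈ G.nodes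
  weak_proper_disjoint : ∀ a b, G.weak a b → G.proper a b → False
  acyclic : ∀ n, ¬ G.Desc n n

/-- The transitive closure of an episode: add an edge from every node to each of its
descendants, proper if the descendant is a proper descendant, weak otherwise. -/
def tcl (G : Episode) : Episode :=
  { G with
    proper := fun a b => G.PDesc a b
    weak := fun a b => G.Desc a b ∧ ¬ G.PDesc a b }

/-- An episode is transitively closed if it coincides with its transitive closure. -/
def TransClosed (G : Episode) : Prop :=
  (∀ a b, G.proper a b ↔ G.PDesc a b) ∧
  (∀ a b, G.weak a b ↔ (G.Desc a b ∧ ¬ G.PDesc a b))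

end Episode

/-- `m` is a coverage mapping of episode `G` into sequence `s`: an injective map from
the episode events into the sequence events preserving labels, mapping events of one
node to a common time stamp, and respecting weak and proper edges. -/
def IsCoverMap (s : EventSeq) (G : Episode) (m : ℕ → SeqEvent) : Prop :=
  (∀ e ∈ G.events, m e ∈ s.events) ∧
  Set.InjOn m ↑G.events ∧
  (∀ e ∈ G.events, (m e).lab = G.lab e) ∧
  (∀ e ∈ G.events, ∀ f ∈ G.events, G.node e = G.node f → (m e).ts = (m f).ts) ∧
  (∀ e ∈ G.events, ∀ f ∈ G.events, G.Desc (G.node f) (G.node e) → (m f).ts ≤ (m e).ts) ∧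
  (∀ e ∈ G.events, ∀ f ∈ G.events, G.PDesc (G.node f) (G.node e) → (m f).ts < (m e).ts)

/-- A sequence `s` covers an episode `G`. -/
def Covers (s : EventSeq) (G : Episode) : Prop := ∃ m, IsCoverMap s G m

/-- `G ⪯ H` : every sequence covering `H` also covers `G`. -/
def Subepisode (G H : Episode) : Prop := ∀ s : EventSeq, Covers s H → Covers s G

/-- `G ∼ H` : `G ⪯ H` and `H ⪯ G`. -/
def EpisodeSimilar (G H : Episode) : Prop := Subepisode G H ∧ Subepisode H G

/-- The window `s[i, j]`: the subsequence of events with time stamps in `[i, j]`. -/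
def EventSeq.window (s : EventSeq) (i j : ℤ) : EventSeq where
  events := s.events.filter (fun e => i ≤ e.ts ∧ e.ts ≤ j)
  id_inj := fun e he f hf h =>
    s.id_inj e (Finset.mem_filter.mp he).1 f (Finset.mem_filter.mp hf).1 h
  ts_mono := fun e he f hf h =>
    s.ts_mono e (Finset.mem_filter.mp he).1 f (Finset.mem_filter.mp hf).1 h

/-- The support `fr(G; s)` with window size `ρ`: the number of integers `t` such that
the window `s[t, t + ρ - 1]` covers `G` (as an extended natural number). -/
noncomputable def support (ρ : ℤ) (s : EventSeq) (G : Episode) : ℕ∞ :=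
  {t : ℤ | Covers (s.window t (t + ρ - 1)) G}.encard

/-- `first(i)` : the smallest time stamp in the range of the instance. -/
noncomputable def instFirst (G : Episode) (m : ℕ → SeqEvent) : ℤ :=
  sInf ((fun e => (m e).ts) '' ↑G.events)

/-- `last(i)` : the largest time stamp in the range of the instance. -/
noncomputable def instLast (G : Episode) (m : ℕ → SeqEvent) : ℤ :=
  sSup ((fun e => (m e).ts) '' ↑G.events)

/-- `m` is an instance of `G` in `s` (with window size `ρ`): a coverage mapping of `G`
into `s` such that no used sequence event can be replaced by an unused one with the same
label, the same time stamp and a smaller id, and whose span is less than `ρ`. -/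
def IsInstance (ρ : ℤ) (s : EventSeq) (G : Episode) (m : ℕ → SeqEvent) : Prop :=
  IsCoverMap s G m ∧
  (∀ e ∈ G.events, ∀ f ∈ s.events, (∀ e' ∈ G.events, m e' ≠ f) →
      f.lab = (m e).lab → f.ts = (m e).ts → ¬ f.id < (m e).id) ∧
  instLast G m - instFirst G m ≤ ρ - 1

/-! Any time stamp assignment to the nodes that is monotone along paths and strictly monotone
along paths through a proper edge yields a coverage mapping, and such an assignment exists as long
as no cycle passes through a proper edge: count the nodes having a proper path to a given node.
To place `node e` before `node f`, add an edge `node e → node f` (proper for `<`, weak for `≤`);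
a cycle through a proper edge of the enlarged graph would give a path from `node f` to `node e`
(through a proper edge, in the weak case). -/

open Relation

namespace Episode

variable {G : Episode} {a b c p q : ℕ}

theorem PDesc.desc (h : G.PDesc a b) : G.Desc a b := by
  obtain ⟨x, y, hax, hxy, hyb⟩ := h
  exact (TransGen.tail' hax (Or.inr hxy)).trans_left hyb

theorem PDesc.exists_edge (h : G.PDesc a b) : ∃ c, G.edge a c := by
  obtain ⟨c, hac, -⟩ := TransGen.head'_iff.mp h.desc
  exact ⟨c, hac⟩

theorem PDesc.trans_reflTransGen (h : G.PDesc a b) (hbc : ReflTransGen G.edge b c) :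
    G.PDesc a c := by
  obtain ⟨x, y, hax, hxy, hyb⟩ := h
  exact ⟨x, y, hax, hxy, hyb.trans hbc⟩

theorem exists_timing (N : Finset ℕ) (hN : ∀ a c, G.edge a c → a ∈ N)
    (hirr : ∀ n, ¬ G.PDesc n n) :
    ∃ t : ℕ → ℕ, (∀ a b, G.Desc a b → t a ≤ t b) ∧ (∀ a b, G.PDesc a b → t a < t b) := by
  classical
  have hsub : ∀ {a b}, G.Desc a b → N.filter (G.PDesc · a) ⊆ N.filter (G.PDesc · b) :=
    fun hab m hm => by
      simp only [Finset.mem_filter] at hm ⊢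
      exact ⟨hm.1, hm.2.trans_reflTransGen hab.to_reflTransGen⟩
  refine ⟨fun n => (N.filter (G.PDesc · n)).card, fun a b hab => Finset.card_le_card (hsub hab),
    fun a b hab => Finset.card_lt_card ?_⟩
  obtain ⟨c, hac⟩ := hab.exists_edge
  exact (Finset.ssubset_iff_of_subset (hsub hab.desc)).mpr
    ⟨a, Finset.mem_filter.mpr ⟨hN a c hac, hab⟩, fun ha => hirr a (Finset.mem_filter.mp ha).2⟩

def withEdge (G : Episode) (p q : ℕ) (P : Prop) : Episode :=
  { G with
    weak := fun a b => G.weak a b ∨ (a = p ∧ b = q ∧ ¬ P)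
    proper := fun a b => G.proper a b ∨ (a = p ∧ b = q ∧ P) }

variable {P : Prop}

theorem withEdge_edge_iff : (G.withEdge p q P).edge a b ↔ G.edge a b ∨ (a = p ∧ b = q) := by
  simp only [withEdge, edge]
  tauto

theorem edge.withEdge (h : G.edge a b) : (G.withEdge p q P).edge a b :=
  withEdge_edge_iff.mpr (Or.inl h)

theorem Desc.withEdge (h : G.Desc a b) : (G.withEdge p q P).Desc a b :=
  TransGen.mono (fun _ _ => edge.withEdge) a b h

theorem PDesc.withEdge (h : G.PDesc a b) : (G.withEdge p q P).PDesc a b := by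
  obtain ⟨x, y, hax, hxy, hyb⟩ := h
  have hmono := ReflTransGen.mono (p := (G.withEdge p q P).edge) (fun _ _ => edge.withEdge)
  exact ⟨x, y, hmono a x hax, Or.inl hxy, hmono y b hyb⟩

theorem reflTransGen_withEdge (h : ReflTransGen (G.withEdge p q P).edge a b) :
    ReflTransGen G.edge a b ∨ (ReflTransGen G.edge a p ∧ ReflTransGen G.edge q b) := by
  induction h with
  | refl => exact Or.inl .refl
  | tail _ hcb ih =>
    rcases withEdge_edge_iff.mp hcb with hcb | ⟨rfl, rfl⟩
    · exact ih.imp (·.tail hcb) (And.imp_right (·.tail hcb))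
    · exact Or.inr ⟨ih.elim id (·.1), .refl⟩

theorem withEdge_pdesc_irrefl (hG : G.WellFormed) (hqp : ¬ G.PDesc q p)
    (hP : P → ¬ ReflTransGen G.edge q p) (n : ℕ) : ¬ (G.withEdge p q P).PDesc n n := by
  rintro ⟨x, y, hnx, hxy, hyn⟩
  -- rotate the cycle so that it starts with its proper edge `x → y`
  have hyx := reflTransGen_withEdge (hyn.trans hnx)
  rcases hxy with hxy | ⟨rfl, rfl, hP'⟩
  · rcases hyx with hyx | ⟨hyp, hqx⟩
    · exact hG.acyclic x (TransGen.head' (Or.inr hxy) hyx)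
    · exact hqp ⟨x, y, hqx, hxy, hyp⟩
  · exact hP hP' (hyx.elim id (·.1))

theorem exists_timing_withEdge (hG : G.WellFormed) (hqp : ¬ G.PDesc q p)
    (hP : P → ¬ ReflTransGen G.edge q p) :
    ∃ t : ℕ → ℕ, (∀ a b, G.Desc a b → t a ≤ t b) ∧ (∀ a b, G.PDesc a b → t a < t b) ∧
      t p ≤ t q ∧ (P → t p < t q) := by
  have hN : ∀ a c, (G.withEdge p q P).edge a c → a ∈ insert p G.nodes := by
    intro a c hac
    rcases withEdge_edge_iff.mp hac with hac | ⟨rfl, -⟩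
    · exact Finset.mem_insert_of_mem (hac.elim (hG.weak_mem a c · |>.1) (hG.proper_mem a c · |>.1))
    · exact Finset.mem_insert_self a _
  obtain ⟨t, hmono, hstrict⟩ := exists_timing _ hN (withEdge_pdesc_irrefl hG hqp hP)
  have hpq : (G.withEdge p q P).edge p q := withEdge_edge_iff.mpr (Or.inr ⟨rfl, rfl⟩)
  refine ⟨t, fun a b h => hmono a b h.withEdge, fun a b h => hstrict a b h.withEdge,
    hmono p q (.single hpq), fun hP' => hstrict p q ⟨p, q, .refl, Or.inr ⟨rfl, rfl, hP'⟩, .refl⟩⟩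

end Episode

/-- Event `k` is sent to time `t (node k)`; its id `k + B * t (node k)`, with `B` exceeding
every event, lists the events by time stamp and recovers `k` as the remainder mod `B`. -/
theorem exists_isCoverMap_of_timing (G : Episode) (t : ℕ → ℕ)
    (hmono : ∀ a b, G.Desc a b → t a ≤ t b) (hstrict : ∀ a b, G.PDesc a b → t a < t b) :
    ∃ s m, IsCoverMap s G m ∧ ∀ k, (m k).ts = t (G.node k) := by
  set B := G.events.sup id + 1
  have hB : ∀ k ∈ G.events, k < B := fun k hk => Nat.lt_succ_of_le (Finset.le_sup (f := id) hk)
  let m : ℕ → SeqEvent := fun k => ⟨k + B * t (G.node k), G.lab k, t (G.node k)⟩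
  have hdiv : ∀ k ∈ G.events, (m k).id / B = t (G.node k) := fun k hk => by
    simp [m, Nat.add_mul_div_left _ _ (Nat.zero_lt_of_lt (hB k hk)), Nat.div_eq_of_lt (hB k hk)]
  have hmod : ∀ k ∈ G.events, (m k).id % B = k := fun k hk => by
    simp [m, Nat.add_mul_mod_self_left, Nat.mod_eq_of_lt (hB k hk)]
  have hinj : Set.InjOn (fun k => (m k).id) G.events := fun k hk k' hk' h => by
    rw [← hmod k hk, ← hmod k' hk']
    exact congrArg (· % B) h
  refine ⟨⟨G.events.image m, ?_, ?_⟩, m, ⟨fun k => Finset.mem_image_of_mem m,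
    fun k hk k' hk' h => hinj hk hk' (congrArg SeqEvent.id h), fun _ _ => rfl, ?_, ?_, ?_⟩,
    fun _ => rfl⟩
  · simp only [Finset.mem_image]
    rintro _ ⟨k, hk, rfl⟩ _ ⟨k', hk', rfl⟩ h
    rw [hinj hk hk' h]
  · simp only [Finset.mem_image]
    rintro _ ⟨k, hk, rfl⟩ _ ⟨k', hk', rfl⟩ h
    have := Nat.div_le_div_right (c := B) h
    rw [hdiv k hk, hdiv k' hk'] at this
    exact Int.ofNat_le.mpr this
  · intro k _ k' _ h
    simp [m, h]
  · exact fun k _ k' _ h => Int.ofNat_le.mpr (hmono _ _ h)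
  · exact fun k _ k' _ h => Int.ofNat_lt.mpr (hstrict _ _ h)

theorem exists_isCoverMap_ts_le_and_lt {G : Episode} (hG : G.WellFormed) {e f : ℕ} {P : Prop}
    (hfe : ¬ G.PDesc (G.node f) (G.node e)) (hP : P → ¬ ReflTransGen G.edge (G.node f) (G.node e)) :
    ∃ s m, IsCoverMap s G m ∧ (m e).ts ≤ (m f).ts ∧ (P → (m e).ts < (m f).ts) := by
  obtain ⟨t, hmono, hstrict, hle, hlt⟩ := Episode.exists_timing_withEdge hG hfe hP
  obtain ⟨s, m, hm, hts⟩ := exists_isCoverMap_of_timing G t hmono hstrict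
  refine ⟨s, m, hm, ?_, fun hP' => ?_⟩ <;> rw [hts, hts]
  · exact_mod_cast hle
  · exact_mod_cast hlt hP'

theorem exists_isCoverMap_ts_lt {G : Episode} (hG : G.WellFormed) {e f : ℕ}
    (hne : G.node e ≠ G.node f) (hfe : ¬ G.Desc (G.node f) (G.node e)) :
    ∃ s m, IsCoverMap s G m ∧ (m e).ts < (m f).ts := by
  have hfe' : ¬ ReflTransGen G.edge (G.node f) (G.node e) := fun h =>
    (reflTransGen_iff_eq_or_transGen.mp h).elim hne hfe
  obtain ⟨s, m, hm, -, hlt⟩ :=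
    exists_isCoverMap_ts_le_and_lt (P := True) hG (fun h => hfe' h.desc.to_reflTransGen)
      fun _ => hfe'
  exact ⟨s, m, hm, hlt trivial⟩

theorem exists_cover_separating_general (G : Episode)
    (hG : G.WellFormed)
    (e f : ℕ) :
    (G.node e ≠ G.node f →
      ∃ (s : EventSeq) (m : ℕ → SeqEvent), IsCoverMap s G m ∧ (m e).ts ≠ (m f).ts) ∧
    (G.node e ≠ G.node f ∧ ¬ G.Desc (G.node f) (G.node e) →
      ∃ (s : EventSeq) (m : ℕ → SeqEvent), IsCoverMap s G m ∧ (m e).ts < (m f).ts) ∧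
    (¬ G.PDesc (G.node f) (G.node e) →
      ∃ (s : EventSeq) (m : ℕ → SeqEvent), IsCoverMap s G m ∧ (m e).ts ≤ (m f).ts) := by
  refine ⟨fun hne => ?_, fun h => exists_isCoverMap_ts_lt hG h.1 h.2, fun hfe => ?_⟩
  · by_cases hfe : G.Desc (G.node f) (G.node e)
    · have hef : ¬ G.Desc (G.node e) (G.node f) := fun h => hG.acyclic _ (hfe.trans h)
      obtain ⟨s, m, hm, hlt⟩ := exists_isCoverMap_ts_lt hG hne.symm hef
      exact ⟨s, m, hm, hlt.ne'⟩
    · obtain ⟨s, m, hm, hlt⟩ := exists_isCoverMap_ts_lt hG hne hfe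
      exact ⟨s, m, hm, hlt.ne⟩
  · obtain ⟨s, m, hm, hle, -⟩ := exists_isCoverMap_ts_le_and_lt (P := False) hG hfe False.elim
    exact ⟨s, m, hm, hle⟩

/-- Lemma 8 of the paper: for a transitively closed episode `G` and
events `e`, `f` of `G`: (1) if `node e ≠ node f` there is a sequence covering `G` via a
mapping `m` with `ts (m e) ≠ ts (m f)`; (2) if, moreover, `node e` is not a descendant
of `node f`, there is one with `ts (m e) < ts (m f)`; (3) if `node e` is not a proper
descendant of `node f`, there is one with `ts (m e) ≤ ts (m f)`. -/
theorem exists_cover_separating (G : Episode)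
    (hG : G.WellFormed) (hGt : G.TransClosed)
    (e f : ℕ) (he : e ∈ G.events) (hf : f ∈ G.events) :
    (G.node e ≠ G.node f →
      ∃ (s : EventSeq) (m : ℕ → SeqEvent), IsCoverMap s G m ∧ (m e).ts ≠ (m f).ts) ∧
    (G.node e ≠ G.node f ∧ ¬ G.Desc (G.node f) (G.node e) →
      ∃ (s : EventSeq) (m : ℕ → SeqEvent), IsCoverMap s G m ∧ (m e).ts < (m f).ts) ∧
    (¬ G.PDesc (G.node f) (G.node e) →
      ∃ (s : EventSeq) (m : ℕ → SeqEvent), IsCoverMap s G m ∧ (m e).ts ≤ (m f).ts) :=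
  exists_cover_separating_general G hG e f
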